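/- Let C > 0, σ_X > 0, σ_Z > 0, and β = C/σ_X. Define the function q : ℝ² → ℝ by q(x, y) = p_X̃(x) · φ((y − x)/σ_Z)/σ_Z, which is the joint density of the pair (X̃, X̃ + Z̃) when X̃ has the truncated Gaussian density p_X̃ and Z̃ is an independent centered Gaussian with standard deviation σ_Z. Then the joint differential entropy satisfies −∫_{ℝ²} q(x, y) · ln(q(x, y)) dx dy = ln(2πe · σ_X · erf(β/√2) · σ_Z) − γ(β). -/

import Mathlib

open MeasureTheory Real
open Filter

/-- The error function `erf a = (2/√π) ∫₀^a e^{−t²} dt`. -/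
noncomputable def erf (a : ℝ) : ℝ := (2 / Real.sqrt π) * ∫ t in (0:ℝ)..a, Real.exp (-t ^ 2)

/-- The standard Gaussian density `φ(a) = e^{−a²/2}/√(2π)`. -/
noncomputable def stdGauss (a : ℝ) : ℝ := Real.exp (-a ^ 2 / 2) / Real.sqrt (2 * π)

/-- `γ(a) = a·φ(a)/erf(a/√2)`. -/
noncomputable def gam (a : ℝ) : ℝ := a * stdGauss a / erf (a / Real.sqrt 2)

/-- The truncated Gaussian density on `[−C, C]` with parameter `σ`. -/
noncomputable def truncGaussPdf (C σ : ℝ) (x : ℝ) : ℝ :=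
  if x ∈ Set.Icc (-C) C then stdGauss (x / σ) / (σ * erf ((C / σ) / Real.sqrt 2)) else 0

/-- The joint density of `(X̃, X̃ + Z̃)`, where `X̃` is truncated Gaussian and `Z̃` is an
independent centered Gaussian with standard deviation `σZ`. -/
noncomputable def jointPdf (C σX σZ : ℝ) (x y : ℝ) : ℝ :=
  truncGaussPdf C σX x * stdGauss ((y - x) / σZ) / σZ

lemma tendsto_mul_exp_neg_mul_sq {b : ℝ} (hb : 0 < b) :
    Tendsto (fun R : ℝ => R * Real.exp (-b * R ^ 2)) atTop (nhds 0) := by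
  have h1 : (fun x : ℝ => x ^ (1:ℝ) * Real.exp (-b * x ^ 2))
      =o[atTop] fun x => Real.exp (-(1/2) * x) :=
    rpow_mul_exp_neg_mul_sq_isLittleO_exp_neg hb 1
  have h2 : Tendsto (fun x : ℝ => Real.exp (-(1/2) * x)) atTop (nhds 0) := by
    apply Real.tendsto_exp_atBot.comp
    exact Tendsto.const_mul_atTop_of_neg (by norm_num) tendsto_id
  have h3 := h1.isBigO.trans_tendsto h2
  apply h3.congr'
  filter_upwards [eventually_gt_atTop (0:ℝ)] with x hx
  rw [Real.rpow_one]

lemma integrable_sq_mul_exp_neg_mul_sq {b : ℝ} (hb : 0 < b) :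
    Integrable fun x : ℝ => x ^ 2 * Real.exp (-b * x ^ 2) := by
  have := integrable_rpow_mul_exp_neg_mul_sq hb (s := 2) (by norm_num)
  apply this.congr
  filter_upwards with x
  rw [show ((2:ℝ)) = ((2:ℕ):ℝ) by norm_num, Real.rpow_natCast]

lemma integral_sq_mul_exp_neg_mul_sq {b : ℝ} (hb : 0 < b) :
    ∫ x : ℝ, x ^ 2 * Real.exp (-b * x ^ 2) = Real.sqrt (π / b) / (2 * b) := by
  have hb' : b ≠ 0 := ne_of_gt hb
  have hcont : Continuous fun x : ℝ => Real.exp (-b * x ^ 2) := by continuity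
  have hcont2 : Continuous fun x : ℝ => x ^ 2 * Real.exp (-b * x ^ 2) := by continuity
  have key : ∀ R : ℝ, ∫ x in (-R)..R, x ^ 2 * Real.exp (-b * x ^ 2)
      = (1/(2*b)) * (∫ x in (-R)..R, Real.exp (-b * x ^ 2))
        - (R / (2*b)) * Real.exp (-b * R ^ 2) - (R / (2*b)) * Real.exp (-b * R ^ 2) := by
    intro R
    have hderiv : ∀ x ∈ Set.uIcc (-R) R, HasDerivAt
        (fun x : ℝ => -(x/(2*b)) * Real.exp (-b * x ^ 2))
        (x ^ 2 * Real.exp (-b * x ^ 2) - (1/(2*b)) * Real.exp (-b * x ^ 2)) x := by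
      intro x _
      have h1 : HasDerivAt (fun x : ℝ => -(x/(2*b))) (-(1/(2*b))) x := by
        simpa using ((hasDerivAt_id x).div_const (2*b)).fun_neg
      have h2 : HasDerivAt (fun x : ℝ => Real.exp (-b * x ^ 2))
          (Real.exp (-b * x ^ 2) * (-b * (2 * x))) x := by
        have : HasDerivAt (fun x : ℝ => -b * x ^ 2) (-b * (2 * x)) x := by
          simpa using ((hasDerivAt_pow 2 x).const_mul (-b))
        exact this.exp
      have := h1.fun_mul h2
      refine this.congr_deriv ?_
      field_simp
      ring
    have h := intervalIntegral.integral_eq_sub_of_hasDerivAt hderiv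
      ((hcont2.sub (continuous_const.mul hcont)).intervalIntegrable _ _)
    rw [intervalIntegral.integral_sub (hcont2.intervalIntegrable _ _)
      ((continuous_const.fun_mul hcont).intervalIntegrable _ _)] at h
    rw [intervalIntegral.integral_const_mul] at h
    simp only [neg_sq, neg_neg, neg_div] at h
    linarith [h]
  have t1 : Tendsto (fun R : ℝ => ∫ x in (-R)..R, x ^ 2 * Real.exp (-b * x ^ 2)) atTop
      (nhds (∫ x : ℝ, x ^ 2 * Real.exp (-b * x ^ 2))) :=
    intervalIntegral_tendsto_integral (integrable_sq_mul_exp_neg_mul_sq hb)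
      tendsto_neg_atTop_atBot tendsto_id
  have t2 : Tendsto (fun R : ℝ => (1/(2*b)) * (∫ x in (-R)..R, Real.exp (-b * x ^ 2))
        - (R / (2*b)) * Real.exp (-b * R ^ 2) - (R / (2*b)) * Real.exp (-b * R ^ 2)) atTop
      (nhds ((1/(2*b)) * Real.sqrt (π / b) - 0 - 0)) := by
    have hz : Tendsto (fun R : ℝ => (R / (2*b)) * Real.exp (-b * R ^ 2)) atTop (nhds 0) := by
      have := (tendsto_mul_exp_neg_mul_sq hb).const_mul (1/(2*b))
      simp only [mul_zero] at this
      apply this.congr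
      intro R; ring
    apply Tendsto.sub _ hz
    apply Tendsto.sub
    · refine Tendsto.const_mul _ ?_
      have := intervalIntegral_tendsto_integral (integrable_exp_neg_mul_sq hb)
        tendsto_neg_atTop_atBot tendsto_id
      rwa [integral_gaussian] at this
    · exact hz
  have := tendsto_nhds_unique (t1.congr (fun R => (key R))) t2
  rw [this]; field_simp; ring

lemma erf_pos {a : ℝ} (ha : 0 < a) : 0 < erf a := by
  apply mul_pos (by positivity)
  apply intervalIntegral.intervalIntegral_pos_of_pos (f := fun t => Real.exp (-t^2))
  · exact (Continuous.intervalIntegrable (by continuity) _ _)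
  · intro x; exact Real.exp_pos _
  · exact ha

lemma intervalIntegral_gauss (C σ : ℝ) (hσ : 0 < σ) :
    ∫ x in (-C)..C, Real.exp (-(x/σ)^2/2)
      = Real.sqrt (2*π) * σ * erf ((C/σ)/Real.sqrt 2) := by
  have h2 : Real.sqrt 2 ≠ 0 := by positivity
  have hc : σ * Real.sqrt 2 ≠ 0 := by positivity
  have e1 : ∀ x : ℝ, Real.exp (-(x/σ)^2/2) = Real.exp (-(x / (σ * Real.sqrt 2))^2) := by
    intro x
    congr 1
    rw [div_pow, div_pow, mul_pow, Real.sq_sqrt (by norm_num : (0:ℝ) ≤ 2)]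
    ring
  simp only [e1]
  rw [intervalIntegral.integral_comp_div (f := fun t => Real.exp (-t^2)) hc]
  have key : ∫ t in (-(C/(σ*Real.sqrt 2)))..(C/(σ*Real.sqrt 2)), Real.exp (-t^2)
      = 2 * ∫ t in (0:ℝ)..(C/(σ*Real.sqrt 2)), Real.exp (-t^2) := by
    set a := C/(σ*Real.sqrt 2)
    have hint : ∀ u v : ℝ, IntervalIntegrable (fun t => Real.exp (-t^2)) volume u v :=
      fun u v => (Continuous.intervalIntegrable (by continuity) _ _)
    have hsplit := intervalIntegral.integral_add_adjacent_intervals (a := -a) (b := 0) (c := a)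
      (hint _ _) (hint _ _)
    have hneg : ∫ t in (-a)..(0:ℝ), Real.exp (-t^2) = ∫ t in (0:ℝ)..a, Real.exp (-t^2) := by
      have := intervalIntegral.integral_comp_neg (a := 0) (b := a)
        (f := fun t => Real.exp (-t^2))
      simpa using this.symm
    rw [← hsplit, hneg]
    ring
  rw [show -C/(σ*Real.sqrt 2) = -(C/(σ*Real.sqrt 2)) by ring, key, erf]
  rw [show C/(σ*Real.sqrt 2) = (C/σ)/Real.sqrt 2 by ring]
  have hπ : Real.sqrt π ≠ 0 := by positivity
  rw [smul_eq_mul]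
  rw [show Real.sqrt (2*π) = Real.sqrt 2 * Real.sqrt π by rw [← Real.sqrt_mul (by norm_num)]]
  field_simp

lemma intervalIntegral_sq_gauss (C σ : ℝ) (hσ : 0 < σ) :
    ∫ x in (-C)..C, x^2 * Real.exp (-(x/σ)^2/2)
      = σ^2 * (∫ x in (-C)..C, Real.exp (-(x/σ)^2/2))
        - 2*σ^2*C*Real.exp (-(C/σ)^2/2) := by
  have hσ' : σ ≠ 0 := ne_of_gt hσ
  have hcont : Continuous fun x : ℝ => Real.exp (-(x/σ)^2/2) := by continuity
  have hcont2 : Continuous fun x : ℝ => x^2 * Real.exp (-(x/σ)^2/2) := by continuity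
  have hderiv : ∀ x ∈ Set.uIcc (-C) C, HasDerivAt
      (fun x : ℝ => -σ^2 * x * Real.exp (-(x/σ)^2/2))
      (x^2 * Real.exp (-(x/σ)^2/2) - σ^2 * Real.exp (-(x/σ)^2/2)) x := by
    intro x _
    have h1 : HasDerivAt (fun x : ℝ => -σ^2 * x) (-σ^2) x := by
      simpa using (hasDerivAt_id x).const_mul (-σ^2)
    have hin : HasDerivAt (fun x : ℝ => -(x/σ)^2/2) (-(x/σ^2)) x := by
      have : HasDerivAt (fun x : ℝ => x/σ) (1/σ) x := (hasDerivAt_id x).div_const σ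
      have := ((this.fun_pow 2).fun_neg).div_const 2
      refine this.congr_deriv ?_
      field_simp
      ring_nf
      field_simp
    have h2 : HasDerivAt (fun x : ℝ => Real.exp (-(x/σ)^2/2))
        (Real.exp (-(x/σ)^2/2) * (-(x/σ^2))) x := hin.exp
    have := h1.fun_mul h2
    refine this.congr_deriv ?_
    field_simp
    ring
  have h := intervalIntegral.integral_eq_sub_of_hasDerivAt hderiv
    ((hcont2.sub (continuous_const.mul hcont)).intervalIntegrable _ _)
  rw [intervalIntegral.integral_sub (hcont2.intervalIntegrable _ _)
    ((continuous_const.fun_mul hcont).intervalIntegrable _ _)] at h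
  rw [intervalIntegral.integral_const_mul] at h
  have hev : Real.exp (-(-C/σ)^2/2) = Real.exp (-(C/σ)^2/2) := by
    congr 2; rw [neg_div, neg_sq]
  rw [hev] at h
  linarith [h]

/-- The joint differential entropy of `(X̃, Y) = (X̃, X̃ + Z̃)`:
`−∫_{ℝ²} q ln q = ln(2πe·σ_X·erf(β/√2)·σ_Z) − γ(β)` with `β = C/σ_X`. -/
theorem truncGauss_jointDiffEntropy (C σX σZ : ℝ) (hC : 0 < C) (hσ : 0 < σX) (hσZ : 0 < σZ) :
    -∫ p : ℝ × ℝ, jointPdf C σX σZ p.1 p.2 * Real.log (jointPdf C σX σZ p.1 p.2)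
      = Real.log (2 * π * Real.exp 1 * σX * erf ((C / σX) / Real.sqrt 2) * σZ)
        - gam (C / σX) := by
  have hπ : (0:ℝ) < π := Real.pi_pos
  have hK : 0 < erf ((C / σX) / Real.sqrt 2) := erf_pos (by positivity)
  set K := erf ((C / σX) / Real.sqrt 2) with hKdef
  set D := Real.sqrt (2*π) * σX * K with hDdef
  set DZ := Real.sqrt (2*π) * σZ with hDZdef
  have hD : 0 < D := by positivity
  have hDZ : 0 < DZ := by positivity
  set f : ℝ → ℝ := truncGaussPdf C σX with hfdef
  set g : ℝ → ℝ := fun z => Real.exp (-(z/σZ)^2/2) / DZ with hgdef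
  set h : ℝ → ℝ := fun x => Real.exp (-(x/σX)^2/2) / D with hhdef
  have hg_pos : ∀ z, 0 < g z := fun z => by rw [hgdef]; positivity
  have hh_pos : ∀ x, 0 < h x := fun x => by rw [hhdef]; positivity
  have hCC : -C ≤ C := by linarith
  -- f as indicator
  have hf_eq : f = Set.indicator (Set.Icc (-C) C) h := by
    funext x
    rw [hfdef, hhdef, truncGaussPdf]
    by_cases hx : x ∈ Set.Icc (-C) C
    · rw [if_pos hx, Set.indicator_of_mem hx, stdGauss, div_div, hDdef, mul_assoc]
    · rw [if_neg hx, Set.indicator_of_notMem hx]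
  -- joint pdf factorization
  have hq : ∀ x y : ℝ, jointPdf C σX σZ x y = f x * g (y - x) := by
    intro x y
    rw [jointPdf, hgdef, hfdef, mul_div_assoc]
    congr 1
    rw [stdGauss, div_div, hDZdef]
  -- continuity
  have hcont_h : Continuous h := by rw [hhdef]; fun_prop
  have hcont_hlh : Continuous (fun x => h x * Real.log (h x)) :=
    hcont_h.mul (hcont_h.log fun x => (hh_pos x).ne')
  -- integrability of f and f log f
  have hint_f : Integrable f := by
    rw [hf_eq]
    exact (hcont_h.integrableOn_Icc).integrable_indicator measurableSet_Icc
  have hflf_eq : (fun x => f x * Real.log (f x))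
      = Set.indicator (Set.Icc (-C) C) (fun x => h x * Real.log (h x)) := by
    funext x
    rw [hf_eq]
    by_cases hx : x ∈ Set.Icc (-C) C
    · rw [Set.indicator_of_mem hx, Set.indicator_of_mem hx]
    · rw [Set.indicator_of_notMem hx, Set.indicator_of_notMem hx, zero_mul]
  have hint_flf : Integrable (fun x => f x * Real.log (f x)) := by
    rw [hflf_eq]
    exact (hcont_hlh.integrableOn_Icc).integrable_indicator measurableSet_Icc
  -- canonical exponent for g
  have hbz : (0:ℝ) < 1/(2*σZ^2) := by positivity
  have hexpZ : ∀ z : ℝ, Real.exp (-(z/σZ)^2/2) = Real.exp (-(1/(2*σZ^2)) * z^2) := by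
    intro z; congr 1; rw [div_pow]; ring
  have hlog_g : ∀ z : ℝ, Real.log (g z) = -(z/σZ)^2/2 - Real.log DZ := by
    intro z
    rw [hgdef]
    rw [Real.log_div (Real.exp_ne_zero _) hDZ.ne', Real.log_exp]
  -- integrability of g and g log g
  have hint_g : Integrable g := by
    have : g = fun z => DZ⁻¹ * Real.exp (-(1/(2*σZ^2)) * z^2) := by
      funext z; rw [hgdef, ← hexpZ z]; ring
    rw [this]
    exact (integrable_exp_neg_mul_sq hbz).const_mul _
  have hglg_eq : (fun z => g z * Real.log (g z)) = fun z =>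
      (-(1/(2*σZ^2)) / DZ) * (z^2 * Real.exp (-(1/(2*σZ^2)) * z^2))
      + (-(Real.log DZ) / DZ) * Real.exp (-(1/(2*σZ^2)) * z^2) := by
    funext z
    rw [hlog_g z, hgdef]
    simp only [← hexpZ z]
    have : -(z/σZ)^2/2 = -(1/(2*σZ^2)) * z^2 := by rw [div_pow]; ring
    rw [this]
    ring
  have hint_glg : Integrable (fun z => g z * Real.log (g z)) := by
    rw [hglg_eq]
    exact (((integrable_sq_mul_exp_neg_mul_sq hbz).const_mul _).add
      ((integrable_exp_neg_mul_sq hbz).const_mul _))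
  -- ∫ g = 1
  have hgauss_val : ∫ z : ℝ, Real.exp (-(1/(2*σZ^2)) * z^2) = DZ := by
    rw [integral_gaussian, hDZdef]
    rw [show π / (1/(2*σZ^2)) = 2*π*σZ^2 by field_simp]
    rw [show 2*π*σZ^2 = (2*π)*σZ^2 by ring, Real.sqrt_mul (by positivity) (σZ^2),
      Real.sqrt_sq hσZ.le]
  have hIg : ∫ z, g z = 1 := by
    have : g = fun z => DZ⁻¹ * Real.exp (-(1/(2*σZ^2)) * z^2) := by
      funext z; rw [hgdef, ← hexpZ z]; ring
    rw [this, integral_const_mul, hgauss_val, inv_mul_cancel₀ hDZ.ne']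
  -- ∫ g log g
  have hIglg : ∫ z, g z * Real.log (g z) = -(1/2) - Real.log DZ := by
    rw [hglg_eq]
    rw [integral_add ((integrable_sq_mul_exp_neg_mul_sq hbz).const_mul _)
      ((integrable_exp_neg_mul_sq hbz).const_mul _)]
    rw [integral_const_mul, integral_const_mul, integral_sq_mul_exp_neg_mul_sq hbz, hgauss_val]
    have h1 : Real.sqrt (π / (1/(2*σZ^2))) = DZ := by
      rw [show π / (1/(2*σZ^2)) = (2*π)*σZ^2 by field_simp,
        Real.sqrt_mul (by positivity) (σZ^2), Real.sqrt_sq hσZ.le, hDZdef]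
    rw [h1]
    field_simp
    ring
  -- ∫ f = 1 and ∫ f log f
  have hIcc_int : ∀ (u : ℝ → ℝ), ∫ x in Set.Icc (-C) C, u x = ∫ x in (-C)..C, u x := by
    intro u
    rw [intervalIntegral.integral_of_le hCC, MeasureTheory.integral_Icc_eq_integral_Ioc]
  have hIf : ∫ x, f x = 1 := by
    rw [hf_eq, MeasureTheory.integral_indicator measurableSet_Icc, hIcc_int, hhdef]
    simp only []
    rw [intervalIntegral.integral_div, intervalIntegral_gauss C σX hσ, ← hKdef, ← hDdef,
      div_self hD.ne']
  have hlog_h : ∀ x : ℝ, Real.log (h x) = -(x/σX)^2/2 - Real.log D := by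
    intro x
    rw [hhdef]
    rw [Real.log_div (Real.exp_ne_zero _) hD.ne', Real.log_exp]
  have hgam : gam (C/σX) = C * Real.exp (-(C/σX)^2/2) / D := by
    rw [gam, stdGauss, hDdef, ← hKdef]
    field_simp
  have hIflf : ∫ x, f x * Real.log (f x) = gam (C/σX) - 1/2 - Real.log D := by
    rw [hflf_eq, MeasureTheory.integral_indicator measurableSet_Icc, hIcc_int]
    have hrw : ∀ x : ℝ, h x * Real.log (h x) =
        (-(1/(2*σX^2))/D) * (x^2 * Real.exp (-(x/σX)^2/2))
        + (-(Real.log D)/D) * Real.exp (-(x/σX)^2/2) := by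
      intro x
      rw [hlog_h x, hhdef]
      simp only []
      have : -(x/σX)^2/2 = -(1/(2*σX^2)) * x^2 := by rw [div_pow]; ring
      rw [this]
      ring
    rw [intervalIntegral.integral_congr (fun x _ => hrw x)]
    have hcg : Continuous fun x : ℝ => Real.exp (-(x/σX)^2/2) := by fun_prop
    have hcg2 : Continuous fun x : ℝ => x^2 * Real.exp (-(x/σX)^2/2) := by fun_prop
    rw [intervalIntegral.integral_add
      (((hcg2).intervalIntegrable _ _).const_mul _)
      (((hcg).intervalIntegrable _ _).const_mul _)]
    rw [intervalIntegral.integral_const_mul, intervalIntegral.integral_const_mul,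
      intervalIntegral_sq_gauss C σX hσ, intervalIntegral_gauss C σX hσ, ← hKdef, ← hDdef,
      hgam]
    field_simp
    ring
  -- shear transfer
  have hmp : MeasurePreserving (fun z : ℝ × ℝ => (z.1, z.2 - z.1))
      (volume : Measure (ℝ × ℝ)) volume := by
    have := measurePreserving_prod_sub (volume : Measure ℝ) volume
    rwa [← Measure.volume_eq_prod] at this
  have htrans : ∫ p : ℝ × ℝ, jointPdf C σX σZ p.1 p.2 * Real.log (jointPdf C σX σZ p.1 p.2)
      = ∫ p : ℝ × ℝ, f p.1 * g p.2 * Real.log (f p.1 * g p.2) := by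
    have h2 := hmp.integral_comp (MeasurableEquiv.shearSubRight ℝ).measurableEmbedding
      (fun p : ℝ × ℝ => f p.1 * g p.2 * Real.log (f p.1 * g p.2))
    rw [← h2]
    simp only [hq]
  -- split the product
  have hf_nonneg : ∀ x, 0 ≤ f x := by
    intro x
    rw [hf_eq]
    exact Set.indicator_apply_nonneg (fun _ => (hh_pos _).le)
  have hFsplit : (fun p : ℝ × ℝ => f p.1 * g p.2 * Real.log (f p.1 * g p.2))
      = fun p : ℝ × ℝ => (f p.1 * Real.log (f p.1)) * g p.2 + f p.1 * (g p.2 * Real.log (g p.2)) := by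
    funext p
    by_cases hfz : f p.1 = 0
    · rw [hfz]; simp
    · rw [Real.log_mul hfz (hg_pos p.2).ne']
      ring
  have hsplit : ∫ p : ℝ × ℝ, f p.1 * g p.2 * Real.log (f p.1 * g p.2)
      = (∫ x, f x * Real.log (f x)) * (∫ z, g z) + (∫ x, f x) * (∫ z, g z * Real.log (g z)) := by
    rw [hFsplit, Measure.volume_eq_prod]
    rw [integral_add (Integrable.mul_prod hint_flf hint_g) (Integrable.mul_prod hint_f hint_glg)]
    rw [integral_prod_mul (fun x => f x * Real.log (f x)) g,
      integral_prod_mul f (fun z => g z * Real.log (g z))]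
  -- assemble
  rw [htrans, hsplit, hIg, hIf, hIflf, hIglg]
  have hDDZ : D * DZ = 2 * π * σX * K * σZ := by
    have hs : Real.sqrt (2*π) * Real.sqrt (2*π) = 2*π := Real.mul_self_sqrt (by positivity)
    rw [hDdef, hDZdef]
    linear_combination (σX * K * σZ) * hs
  have hfinal : Real.log (2 * π * Real.exp 1 * σX * K * σZ) = 1 + Real.log D + Real.log DZ := by
    rw [show 2 * π * Real.exp 1 * σX * K * σZ = Real.exp 1 * (D * DZ) by rw [hDDZ]; ring]
    rw [Real.log_mul (Real.exp_ne_zero 1) (by positivity), Real.log_exp,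
      Real.log_mul hD.ne' hDZ.ne']
    ring
  rw [hfinal]
  ring
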